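/- arXiv:1507.07194 — 2 statements merged into one kernel-verified Lean document; each statement's English description precedes it below -/
import Mathlib

section
/- Every finite simple graph G with at least one edge contains a 1-cheap set consisting of exactly two non-isolated vertices. -/
open SimpleGraph Finset

/-- The minimum degree of a subgraph `H` of `G`: the infimum over vertices of `H`
of the number of neighbors in `H`. -/
noncomputable def subMinDeg {V : Type*} (G : SimpleGraph V) (H : G.Subgraph) : ℕ :=
  sInf ((fun v => (H.neighborSet v).ncard) '' H.verts)

/-- The degenerate degree `ζ(v)`: the maximum of `δ(H)` over all subgraphs `H` of `G`
containing `v`. -/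
noncomputable def zeta {V : Type*} (G : SimpleGraph V) (v : V) : ℕ :=
  sSup {n | ∃ H : G.Subgraph, v ∈ H.verts ∧ subMinDeg G H = n}

/-- A vertex `u` is cheap if `ζ(u) = deg_G(u)` and `ζ(u) ≤ ζ(w)` for every `w ∈ N[u]`. -/
def Cheap {V : Type*} (G : SimpleGraph V) (u : V) : Prop :=
  zeta G u = (G.neighborSet u).ncard ∧ ∀ w, G.Adj u w → zeta G u ≤ zeta G w

section Aux

variable {V : Type*} [Fintype V] [DecidableEq V] (G : SimpleGraph V) [DecidableRel G.Adj]

lemma subMinDeg_le_ncard {H : G.Subgraph} {v : V} (hv : v ∈ H.verts) :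
    subMinDeg G H ≤ (H.neighborSet v).ncard :=
  Nat.sInf_le ⟨v, hv, rfl⟩

lemma ncard_nbr_le (H : G.Subgraph) (v : V) : (H.neighborSet v).ncard ≤ Fintype.card V := by
  have h := Set.ncard_le_ncard (Set.subset_univ (H.neighborSet v)) Set.finite_univ
  simpa [Set.ncard_univ] using h

lemma zeta_bdd (v : V) : BddAbove {n | ∃ H : G.Subgraph, v ∈ H.verts ∧ subMinDeg G H = n} := by
  refine ⟨Fintype.card V, ?_⟩
  rintro n ⟨H, hv, rfl⟩
  exact le_trans (subMinDeg_le_ncard G hv) (ncard_nbr_le G H v)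

lemma zeta_set_nonempty (v : V) :
    Set.Nonempty {n | ∃ H : G.Subgraph, v ∈ H.verts ∧ subMinDeg G H = n} :=
  ⟨subMinDeg G (G.singletonSubgraph v), G.singletonSubgraph v, by simp, rfl⟩

lemma le_zeta_of_subgraph {H : G.Subgraph} {v : V} (hv : v ∈ H.verts) :
    subMinDeg G H ≤ zeta G v :=
  le_csSup (zeta_bdd G v) ⟨H, hv, rfl⟩

lemma ncard_neighborSet_eq_degree (v : V) : (G.neighborSet v).ncard = G.degree v := by
  rw [Set.ncard_eq_toFinset_card', ← SimpleGraph.neighborFinset_def]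
  rfl

lemma zeta_le_degree (v : V) : zeta G v ≤ G.degree v := by
  refine csSup_le (zeta_set_nonempty G v) ?_
  rintro n ⟨H, hv, rfl⟩
  calc subMinDeg G H ≤ (H.neighborSet v).ncard := subMinDeg_le_ncard G hv
    _ ≤ (G.neighborSet v).ncard := Set.ncard_le_ncard (H.neighborSet_subset v) (Set.toFinite _)
    _ = G.degree v := ncard_neighborSet_eq_degree G v

lemma zeta_attained (v : V) : ∃ H : G.Subgraph, v ∈ H.verts ∧ subMinDeg G H = zeta G v := by
  have h := Nat.sSup_mem (zeta_set_nonempty G v) (zeta_bdd G v)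
  exact h

/-- Z3: the degenerate degree of a tight vertex is at most that of any of its neighbors. -/
lemma zeta_le_zeta_of_adj {a x : V} (ha : zeta G a = G.degree a) (hax : G.Adj a x) :
    zeta G a ≤ zeta G x := by
  obtain ⟨H, hmem, hH⟩ := zeta_attained G a
  have hsub : H.neighborSet a ⊆ G.neighborSet a := H.neighborSet_subset a
  have hge : (G.neighborSet a).ncard ≤ (H.neighborSet a).ncard := by
    have h1 : subMinDeg G H ≤ (H.neighborSet a).ncard := subMinDeg_le_ncard G hmem
    rw [ncard_neighborSet_eq_degree, ← ha, ← hH]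
    exact h1
  have heq : H.neighborSet a = G.neighborSet a :=
    Set.eq_of_subset_of_ncard_le hsub hge (Set.toFinite _)
  have hxH : H.Adj a x := by
    have : x ∈ H.neighborSet a := by rw [heq]; exact hax
    exact this
  calc zeta G a = subMinDeg G H := hH.symm
    _ ≤ zeta G x := le_zeta_of_subgraph G hxH.snd_mem

/-- Z2: every nonempty finite vertex set contains a vertex whose degree inside the set is at
most the degenerate degree of every member of the set. -/
lemma exists_min_zeta (s : Finset V) (hs : s.Nonempty) :
    ∃ v ∈ s, ∀ x ∈ s, (s.filter (G.Adj v)).card ≤ zeta G x := by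
  classical
  set H : G.Subgraph := (⊤ : G.Subgraph).induce ↑s with hHdef
  have hverts : H.verts = ↑s := rfl
  have hnbr : ∀ v ∈ s, (H.neighborSet v).ncard = (s.filter (G.Adj v)).card := by
    intro v hv
    have hset : H.neighborSet v = ↑(s.filter (G.Adj v)) := by
      ext y
      simp only [SimpleGraph.Subgraph.mem_neighborSet, hHdef, SimpleGraph.Subgraph.induce_adj,
        SimpleGraph.Subgraph.top_adj, Finset.coe_filter, Set.mem_setOf_eq, Finset.mem_coe,
        Set.mem_setOf_eq]
      constructor
      · rintro ⟨-, hy, hadj⟩; exact ⟨hy, hadj⟩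
      · rintro ⟨hy, hadj⟩; exact ⟨hv, hy, hadj⟩
    rw [hset, Set.ncard_coe_finset]
  obtain ⟨v₀, hv₀⟩ := hs
  have hne : ((fun v => (H.neighborSet v).ncard) '' H.verts).Nonempty :=
    ⟨_, ⟨v₀, by rw [hverts]; exact hv₀, rfl⟩⟩
  have hmem : subMinDeg G H ∈ (fun v => (H.neighborSet v).ncard) '' H.verts :=
    Nat.sInf_mem hne
  obtain ⟨v, hvH, hveq⟩ := hmem
  have hvs : v ∈ s := by rwa [hverts] at hvH
  refine ⟨v, hvs, ?_⟩
  intro x hx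
  have h1 : subMinDeg G H ≤ zeta G x := le_zeta_of_subgraph G (by rw [hverts]; exact hx)
  calc (s.filter (G.Adj v)).card = (H.neighborSet v).ncard := (hnbr v hvs).symm
    _ = subMinDeg G H := hveq
    _ ≤ zeta G x := h1

lemma f_nonneg (v : V) : (0 : ℝ) ≤ 1 / (zeta G v + 1/2) := by positivity

lemma sum_f_le (W : Finset V) (q : ℕ) (h : ∀ v ∈ W, q ≤ zeta G v) :
    ∑ v ∈ W, (1 : ℝ) / (zeta G v + 1/2) ≤ (W.card : ℝ) * (1 / ((q : ℝ) + 1/2)) := by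
  have hb : ∀ v ∈ W, (1 : ℝ) / (zeta G v + 1/2) ≤ 1 / ((q : ℝ) + 1/2) := by
    intro v hv
    apply one_div_le_one_div_of_le (by positivity)
    have hq : (q : ℝ) ≤ (zeta G v : ℝ) := Nat.cast_le.mpr (h v hv)
    linarith
  calc ∑ v ∈ W, (1 : ℝ) / (zeta G v + 1/2) ≤ W.card • (1 / ((q : ℝ) + 1/2)) :=
        Finset.sum_le_card_nsmul _ _ _ hb
    _ = (W.card : ℝ) * (1 / ((q : ℝ) + 1/2)) := by rw [nsmul_eq_mul]

lemma sum_union_le3 (W₁ W₂ W₃ U : Finset V) (hU : U ⊆ W₁ ∪ W₂ ∪ W₃) :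
    ∑ v ∈ U, (1 : ℝ) / (zeta G v + 1/2) ≤
      ∑ v ∈ W₁, (1 : ℝ) / (zeta G v + 1/2) + ∑ v ∈ W₂, (1 : ℝ) / (zeta G v + 1/2)
        + ∑ v ∈ W₃, (1 : ℝ) / (zeta G v + 1/2) := by
  classical
  have h0 : ∑ v ∈ U, (1 : ℝ) / (zeta G v + 1/2) ≤
      ∑ v ∈ W₁ ∪ W₂ ∪ W₃, (1 : ℝ) / (zeta G v + 1/2) :=
    Finset.sum_le_sum_of_subset_of_nonneg hU (fun v _ _ => f_nonneg G v)
  have h12 : ∑ v ∈ W₁ ∪ W₂, (1 : ℝ) / (zeta G v + 1/2) ≤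
      ∑ v ∈ W₁, (1 : ℝ) / (zeta G v + 1/2) + ∑ v ∈ W₂, (1 : ℝ) / (zeta G v + 1/2) := by
    rw [← Finset.sum_union_inter]
    have : (0:ℝ) ≤ ∑ v ∈ W₁ ∩ W₂, (1 : ℝ) / (zeta G v + 1/2) :=
      Finset.sum_nonneg (fun v _ => f_nonneg G v)
    linarith
  have h123 : ∑ v ∈ W₁ ∪ W₂ ∪ W₃, (1 : ℝ) / (zeta G v + 1/2) ≤
      ∑ v ∈ W₁ ∪ W₂, (1 : ℝ) / (zeta G v + 1/2) + ∑ v ∈ W₃, (1 : ℝ) / (zeta G v + 1/2) := by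
    rw [← Finset.sum_union_inter]
    have : (0:ℝ) ≤ ∑ v ∈ (W₁ ∪ W₂) ∩ W₃, (1 : ℝ) / (zeta G v + 1/2) :=
      Finset.sum_nonneg (fun v _ => f_nonneg G v)
    linarith
  linarith

/-- The master arithmetic lemma: a covering of the closed neighborhood of the pair by three
pieces of sizes `p`, `1`, `q` with zeta lower bounds `p`, `q`, `q` and `p ≤ q` gives sum `≤ 2`. -/
lemma master (u w : V) (p q : ℕ) (hpq : p ≤ q) (W₁ W₂ W₃ : Finset V)
    (hU : Finset.univ.filter (fun v => v = u ∨ v = w ∨ G.Adj u v ∨ G.Adj w v) ⊆ W₁ ∪ W₂ ∪ W₃)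
    (h1c : W₁.card ≤ p) (h2c : W₂.card ≤ 1) (h3c : W₃.card ≤ q)
    (h1 : ∀ v ∈ W₁, p ≤ zeta G v) (h2 : ∀ v ∈ W₂, q ≤ zeta G v)
    (h3 : ∀ v ∈ W₃, q ≤ zeta G v) :
    (∑ v ∈ Finset.univ.filter
        (fun v => v = u ∨ v = w ∨ G.Adj u v ∨ G.Adj w v),
      (1 : ℝ) / (zeta G v + 1/2)) ≤ 2 := by
  have hp0 : (0:ℝ) < (p:ℝ) + 1/2 := by positivity
  have hq0 : (0:ℝ) < (q:ℝ) + 1/2 := by positivity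
  have b1 : ∑ v ∈ W₁, (1 : ℝ) / (zeta G v + 1/2) ≤ (p : ℝ) * (1 / ((p:ℝ) + 1/2)) := by
    refine le_trans (sum_f_le G W₁ p h1) ?_
    have : (W₁.card : ℝ) ≤ (p : ℝ) := Nat.cast_le.mpr h1c
    have hpos : (0:ℝ) ≤ 1 / ((p:ℝ) + 1/2) := by positivity
    exact mul_le_mul_of_nonneg_right this hpos
  have b2 : ∑ v ∈ W₂, (1 : ℝ) / (zeta G v + 1/2) ≤ (1 : ℝ) * (1 / ((q:ℝ) + 1/2)) := by
    refine le_trans (sum_f_le G W₂ q h2) ?_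
    have : (W₂.card : ℝ) ≤ (1 : ℝ) := by exact_mod_cast h2c
    have hpos : (0:ℝ) ≤ 1 / ((q:ℝ) + 1/2) := by positivity
    exact mul_le_mul_of_nonneg_right this hpos
  have b3 : ∑ v ∈ W₃, (1 : ℝ) / (zeta G v + 1/2) ≤ (q : ℝ) * (1 / ((q:ℝ) + 1/2)) := by
    refine le_trans (sum_f_le G W₃ q h3) ?_
    have : (W₃.card : ℝ) ≤ (q : ℝ) := Nat.cast_le.mpr h3c
    have hpos : (0:ℝ) ≤ 1 / ((q:ℝ) + 1/2) := by positivity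
    exact mul_le_mul_of_nonneg_right this hpos
  have hcover := sum_union_le3 G W₁ W₂ W₃ _ hU
  have harith : (p : ℝ) * (1 / ((p:ℝ) + 1/2)) + (1 : ℝ) * (1 / ((q:ℝ) + 1/2))
      + (q : ℝ) * (1 / ((q:ℝ) + 1/2)) ≤ 2 := by
    have hpq' : (p : ℝ) ≤ (q : ℝ) := Nat.cast_le.mpr hpq
    have hp' : (0:ℝ) ≤ (p:ℝ) := Nat.cast_nonneg p
    have e1 : (p : ℝ) * (1 / ((p:ℝ) + 1/2)) = (p:ℝ) / ((p:ℝ) + 1/2) := by ring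
    have e2 : (1 : ℝ) * (1 / ((q:ℝ) + 1/2)) + (q : ℝ) * (1 / ((q:ℝ) + 1/2))
        = (1 + (q:ℝ)) / ((q:ℝ) + 1/2) := by ring
    rw [e1]
    have : (p:ℝ) / ((p:ℝ) + 1/2) + (1 + (q:ℝ)) / ((q:ℝ) + 1/2) ≤ 2 := by
      rw [div_add_div _ _ (ne_of_gt hp0) (ne_of_gt hq0), div_le_iff₀ (by positivity)]
      nlinarith
    linarith
  linarith

lemma build_goal (u w : V) (hne : u ≠ w) (hu : 0 < G.degree u) (hw : 0 < G.degree w)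
    (hsum : (∑ v ∈ Finset.univ.filter
        (fun v => v = u ∨ v = w ∨ G.Adj u v ∨ G.Adj w v),
      (1 : ℝ) / (zeta G v + 1/2)) ≤ 2) :
    ∃ u w : V, u ≠ w ∧ 0 < G.degree u ∧ 0 < G.degree w ∧
      (∀ v ∈ ({u, w} : Finset V), (({u, w} : Finset V).filter (G.Adj v)).card ≤ 1) ∧
      (∑ v ∈ Finset.univ.filter
          (fun v => v = u ∨ v = w ∨ G.Adj u v ∨ G.Adj w v),
        (1 : ℝ) / (zeta G v + 1/2)) ≤ 2 := by
  refine ⟨u, w, hne, hu, hw, ?_, hsum⟩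
  intro v hv
  have hsubset : ({u, w} : Finset V).filter (G.Adj v) ⊆ ({u, w} : Finset V).erase v := by
    intro y hy
    rw [Finset.mem_filter] at hy
    refine Finset.mem_erase.mpr ⟨?_, hy.1⟩
    intro h
    exact G.irrefl (h ▸ hy.2)
  calc (({u, w} : Finset V).filter (G.Adj v)).card ≤ (({u, w} : Finset V).erase v).card :=
        Finset.card_le_card hsubset
    _ = ({u, w} : Finset V).card - 1 := Finset.card_erase_of_mem hv
    _ ≤ 1 := by
        have : ({u, w} : Finset V).card ≤ 2 := Finset.card_insert_le _ _ |>.trans (by simp)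
        omega

end Aux

theorem stmt_13 {V : Type*} [Fintype V] [DecidableEq V] (G : SimpleGraph V)
    [DecidableRel G.Adj] (hedge : ∃ u w : V, G.Adj u w) :
    ∃ u w : V, u ≠ w ∧ 0 < G.degree u ∧ 0 < G.degree w ∧
      (∀ v ∈ ({u, w} : Finset V), (({u, w} : Finset V).filter (G.Adj v)).card ≤ 1) ∧
      (∑ v ∈ Finset.univ.filter
          (fun v => v = u ∨ v = w ∨ G.Adj u v ∨ G.Adj w v),
        (1 : ℝ) / (zeta G v + 1/2)) ≤ 2 := by
  classical
  obtain ⟨a₀, b₀, hab₀⟩ := hedge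
  -- Step 1: there is a tight vertex.
  have hT : ∃ u : V, 0 < G.degree u ∧ zeta G u = G.degree u := by
    set T : Finset V := Finset.univ.filter (fun v => 0 < G.degree v) with hTdef
    have haT : a₀ ∈ T := by
      simp only [hTdef, Finset.mem_filter, Finset.mem_univ, true_and]
      rw [G.degree_pos_iff_exists_adj]
      exact ⟨b₀, hab₀⟩
    obtain ⟨u, huT, hu⟩ := exists_min_zeta G T ⟨a₀, haT⟩
    have hnbrT : T.filter (G.Adj u) = G.neighborFinset u := by
      ext y
      simp only [hTdef, Finset.mem_filter, Finset.mem_univ, true_and,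
        SimpleGraph.mem_neighborFinset]
      constructor
      · rintro ⟨-, h⟩; exact h
      · intro h
        refine ⟨?_, h⟩
        rw [G.degree_pos_iff_exists_adj]
        exact ⟨u, h.symm⟩
    have hdeg : G.degree u ≤ zeta G u := by
      have := hu u huT
      rwa [hnbrT, SimpleGraph.card_neighborFinset_eq_degree] at this
    have hupos : 0 < G.degree u := by
      simp only [hTdef, Finset.mem_filter] at huT
      exact huT.2
    exact ⟨u, hupos, le_antisymm (zeta_le_degree G u) hdeg⟩
  obtain ⟨u₁, hu₁pos, hu₁tight⟩ := hT
  -- Case split on whether two tight vertices are at distance ≤ 2.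
  by_cases hA : ∃ a b : V, a ≠ b ∧ (0 < G.degree a ∧ zeta G a = G.degree a) ∧
      (0 < G.degree b ∧ zeta G b = G.degree b) ∧
      (G.Adj a b ∨ ∃ c : V, G.Adj a c ∧ G.Adj b c)
  · obtain ⟨a, b, hab, ⟨hapos, hatight⟩, ⟨hbpos, hbtight⟩, hdist⟩ := hA
    rcases hdist with hadj | ⟨c, hac, hbc⟩
    · -- Case A1: adjacent tight vertices. Then ζ a = ζ b.
      have h1 : zeta G a ≤ zeta G b := zeta_le_zeta_of_adj G hatight hadj
      have h2 : zeta G b ≤ zeta G a := zeta_le_zeta_of_adj G hbtight hadj.symm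
      have heq : zeta G a = zeta G b := le_antisymm h1 h2
      set p := zeta G a with hp
      set q := zeta G b with hq
      refine build_goal G a b hadj.ne hapos hbpos ?_
      refine master G a b p q (le_of_eq heq) (insert a ((G.neighborFinset a).erase b))
        {b} ((G.neighborFinset b).erase a) ?_ ?_ ?_ ?_ ?_ ?_ ?_
      · intro v hv
        simp only [Finset.mem_filter, Finset.mem_univ, true_and] at hv
        simp only [Finset.mem_union, Finset.mem_insert, Finset.mem_erase,
          Finset.mem_singleton, SimpleGraph.mem_neighborFinset]
        rcases hv with rfl | rfl | h | h
        · exact Or.inl (Or.inl (Or.inl rfl))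
        · exact Or.inl (Or.inr rfl)
        · by_cases hb : v = b
          · exact Or.inl (Or.inr hb)
          · exact Or.inl (Or.inl (Or.inr ⟨hb, h⟩))
        · by_cases ha : v = a
          · exact Or.inl (Or.inl (Or.inl ha))
          · exact Or.inr ⟨ha, h⟩
      · have hbmem : b ∈ G.neighborFinset a := by rwa [SimpleGraph.mem_neighborFinset]
        calc (insert a ((G.neighborFinset a).erase b)).card
            ≤ ((G.neighborFinset a).erase b).card + 1 := Finset.card_insert_le _ _
          _ = (G.degree a - 1) + 1 := by
              rw [Finset.card_erase_of_mem hbmem, SimpleGraph.card_neighborFinset_eq_degree]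
          _ = G.degree a := by omega
          _ = p := hatight.symm
      · simp
      · calc ((G.neighborFinset b).erase a).card ≤ (G.neighborFinset b).card :=
              Finset.card_le_card (Finset.erase_subset _ _)
          _ = G.degree b := SimpleGraph.card_neighborFinset_eq_degree G b
          _ = q := hbtight.symm
      · intro v hv
        rcases Finset.mem_insert.mp hv with rfl | hv'
        · exact le_refl _
        · have : G.Adj a v := by
            have := Finset.mem_of_mem_erase hv'
            rwa [SimpleGraph.mem_neighborFinset] at this
          exact zeta_le_zeta_of_adj G hatight this
      · intro v hv
        rw [Finset.mem_singleton] at hv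
        subst hv; exact le_refl _
      · intro v hv
        have : G.Adj b v := by
          have := Finset.mem_of_mem_erase hv
          rwa [SimpleGraph.mem_neighborFinset] at this
        exact zeta_le_zeta_of_adj G hbtight this
    · -- Case A2: tight vertices with a common neighbor. WLOG ζ a ≤ ζ b.
      have main2 : ∀ a b c : V, a ≠ b → (0 < G.degree a ∧ zeta G a = G.degree a) →
          (0 < G.degree b ∧ zeta G b = G.degree b) → G.Adj a c → G.Adj b c →
          zeta G a ≤ zeta G b →
          ∃ u w : V, u ≠ w ∧ 0 < G.degree u ∧ 0 < G.degree w ∧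
            (∀ v ∈ ({u, w} : Finset V), (({u, w} : Finset V).filter (G.Adj v)).card ≤ 1) ∧
            (∑ v ∈ Finset.univ.filter
                (fun v => v = u ∨ v = w ∨ G.Adj u v ∨ G.Adj w v),
              (1 : ℝ) / (zeta G v + 1/2)) ≤ 2 := by
        intro a b c hab ⟨hapos, hatight⟩ ⟨hbpos, hbtight⟩ hac hbc hle
        set p := zeta G a with hp
        set q := zeta G b with hq
        refine build_goal G a b hab hapos hbpos ?_
        refine master G a b p q hle (insert a ((G.neighborFinset a).erase c))
          {c} (insert b ((G.neighborFinset b).erase c)) ?_ ?_ ?_ ?_ ?_ ?_ ?_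
        · intro v hv
          simp only [Finset.mem_filter, Finset.mem_univ, true_and] at hv
          simp only [Finset.mem_union, Finset.mem_insert, Finset.mem_erase,
            Finset.mem_singleton, SimpleGraph.mem_neighborFinset]
          rcases hv with rfl | rfl | h | h
          · exact Or.inl (Or.inl (Or.inl rfl))
          · exact Or.inr (Or.inl rfl)
          · by_cases hc : v = c
            · exact Or.inl (Or.inr hc)
            · exact Or.inl (Or.inl (Or.inr ⟨hc, h⟩))
          · by_cases hc : v = c
            · exact Or.inl (Or.inr hc)
            · exact Or.inr (Or.inr ⟨hc, h⟩)
        · have hcmem : c ∈ G.neighborFinset a := by rwa [SimpleGraph.mem_neighborFinset]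
          calc (insert a ((G.neighborFinset a).erase c)).card
              ≤ ((G.neighborFinset a).erase c).card + 1 := Finset.card_insert_le _ _
            _ = (G.degree a - 1) + 1 := by
                rw [Finset.card_erase_of_mem hcmem, SimpleGraph.card_neighborFinset_eq_degree]
            _ = G.degree a := by omega
            _ = p := hatight.symm
        · simp
        · have hcmem : c ∈ G.neighborFinset b := by rwa [SimpleGraph.mem_neighborFinset]
          calc (insert b ((G.neighborFinset b).erase c)).card
              ≤ ((G.neighborFinset b).erase c).card + 1 := Finset.card_insert_le _ _
            _ = (G.degree b - 1) + 1 := by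
                rw [Finset.card_erase_of_mem hcmem, SimpleGraph.card_neighborFinset_eq_degree]
            _ = G.degree b := by omega
            _ = q := hbtight.symm
        · intro v hv
          rcases Finset.mem_insert.mp hv with rfl | hv'
          · exact le_refl _
          · have : G.Adj a v := by
              have := Finset.mem_of_mem_erase hv'
              rwa [SimpleGraph.mem_neighborFinset] at this
            exact zeta_le_zeta_of_adj G hatight this
        · intro v hv
          rw [Finset.mem_singleton] at hv
          subst hv
          exact zeta_le_zeta_of_adj G hbtight hbc
        · intro v hv
          rcases Finset.mem_insert.mp hv with rfl | hv'
          · exact le_refl _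
          · have : G.Adj b v := by
              have := Finset.mem_of_mem_erase hv'
              rwa [SimpleGraph.mem_neighborFinset] at this
            exact zeta_le_zeta_of_adj G hbtight this
      rcases le_total (zeta G a) (zeta G b) with hle | hle
      · exact main2 a b c hab ⟨hapos, hatight⟩ ⟨hbpos, hbtight⟩ hac hbc hle
      · exact main2 b a c hab.symm ⟨hbpos, hbtight⟩ ⟨hapos, hatight⟩ hbc hac hle
  · -- Residual case: no two tight vertices at distance ≤ 2.
    push_neg at hA
    set S : Finset V := Finset.univ.filter
      (fun v => 0 < G.degree v ∧ zeta G v ≠ G.degree v) with hSdef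
    -- S is nonempty: a neighbor of the tight vertex u₁ cannot be tight.
    obtain ⟨x₁, hx₁⟩ := (G.degree_pos_iff_exists_adj u₁).mp hu₁pos
    have hx₁S : x₁ ∈ S := by
      simp only [hSdef, Finset.mem_filter, Finset.mem_univ, true_and]
      refine ⟨by rw [G.degree_pos_iff_exists_adj]; exact ⟨u₁, hx₁.symm⟩, ?_⟩
      intro hx₁tight
      exact (hA u₁ x₁ hx₁.ne ⟨hu₁pos, hu₁tight⟩
        ⟨by rw [G.degree_pos_iff_exists_adj]; exact ⟨u₁, hx₁.symm⟩, hx₁tight⟩).1 hx₁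
    obtain ⟨v₀, hv₀S, hv₀min⟩ := exists_min_zeta G S ⟨x₁, hx₁S⟩
    have hv₀pos : 0 < G.degree v₀ := by
      simp only [hSdef, Finset.mem_filter] at hv₀S; exact hv₀S.2.1
    have hv₀nt : zeta G v₀ ≠ G.degree v₀ := by
      simp only [hSdef, Finset.mem_filter] at hv₀S; exact hv₀S.2.2
    set dS := (S.filter (G.Adj v₀)).card with hdSdef
    -- tight neighbors of v₀
    set Tn : Finset V := (G.neighborFinset v₀).filter (fun y => zeta G y = G.degree y)
      with hTndef
    have hTn1 : Tn.card ≤ 1 := by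
      by_contra h
      push_neg at h
      obtain ⟨y₁, hy₁, y₂, hy₂, hyne⟩ := Finset.one_lt_card.mp h
      simp only [hTndef, Finset.mem_filter, SimpleGraph.mem_neighborFinset] at hy₁ hy₂
      have hy₁pos : 0 < G.degree y₁ := by
        rw [G.degree_pos_iff_exists_adj]; exact ⟨v₀, hy₁.1.symm⟩
      have hy₂pos : 0 < G.degree y₂ := by
        rw [G.degree_pos_iff_exists_adj]; exact ⟨v₀, hy₂.1.symm⟩
      exact (hA y₁ y₂ hyne ⟨hy₁pos, hy₁.2⟩ ⟨hy₂pos, hy₂.2⟩).2 v₀ hy₁.1.symm hy₂.1.symm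
    -- split the neighborhood of v₀
    have hsplit : Tn.card + ((G.neighborFinset v₀).filter
        (fun y => ¬ (zeta G y = G.degree y))).card = G.degree v₀ := by
      rw [hTndef, Finset.card_filter_add_card_filter_not,
        SimpleGraph.card_neighborFinset_eq_degree]
    have hntS : (G.neighborFinset v₀).filter (fun y => ¬ (zeta G y = G.degree y))
        ⊆ S.filter (G.Adj v₀) := by
      intro y hy
      simp only [Finset.mem_filter, SimpleGraph.mem_neighborFinset] at hy
      simp only [hSdef, Finset.mem_filter, Finset.mem_univ, true_and]
      exact ⟨⟨by rw [G.degree_pos_iff_exists_adj]; exact ⟨v₀, hy.1.symm⟩, hy.2⟩, hy.1⟩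
    have hchain1 : G.degree v₀ ≤ 1 + dS := by
      have := Finset.card_le_card hntS
      omega
    have hchain2 : dS ≤ zeta G v₀ := hv₀min v₀ hv₀S
    have hchain3 : zeta G v₀ + 1 ≤ G.degree v₀ :=
      Nat.succ_le_of_lt (lt_of_le_of_ne (zeta_le_degree G v₀) hv₀nt)
    -- all equalities
    have hdeg_v₀ : G.degree v₀ = zeta G v₀ + 1 := by omega
    have hdS : dS = zeta G v₀ := by omega
    have hTncard : Tn.card = 1 := by
      have := Finset.card_le_card hntS
      omega
    obtain ⟨u₀, hu₀eq⟩ := Finset.card_eq_one.mp hTncard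
    have hu₀mem : u₀ ∈ Tn := by rw [hu₀eq]; exact Finset.mem_singleton_self u₀
    simp only [hTndef, Finset.mem_filter, SimpleGraph.mem_neighborFinset] at hu₀mem
    obtain ⟨hadj₀, hu₀tight⟩ := hu₀mem
    -- hadj₀ : G.Adj v₀ u₀
    set m := zeta G v₀ with hm
    set k := zeta G u₀ with hk
    have hkm : k ≤ m := zeta_le_zeta_of_adj G hu₀tight hadj₀.symm
    have hother : ∀ y, G.Adj v₀ y → y ≠ u₀ → m ≤ zeta G y := by
      intro y hy hyne
      have hynt : ¬ (zeta G y = G.degree y) := by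
        intro hyt
        have : y ∈ Tn := by
          simp only [hTndef, Finset.mem_filter, SimpleGraph.mem_neighborFinset]
          exact ⟨hy, hyt⟩
        rw [hu₀eq, Finset.mem_singleton] at this
        exact hyne this
      have hyS : y ∈ S := by
        simp only [hSdef, Finset.mem_filter, Finset.mem_univ, true_and]
        exact ⟨by rw [G.degree_pos_iff_exists_adj]; exact ⟨v₀, hy.symm⟩, hynt⟩
      calc m = dS := hdS.symm
        _ ≤ zeta G y := hv₀min y hyS
    have hu₀pos : 0 < G.degree u₀ := by
      rw [G.degree_pos_iff_exists_adj]; exact ⟨v₀, hadj₀.symm⟩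
    refine build_goal G u₀ v₀ (G.ne_of_adj hadj₀).symm hu₀pos hv₀pos ?_
    refine master G u₀ v₀ k m hkm (insert u₀ ((G.neighborFinset u₀).erase v₀))
      {v₀} ((G.neighborFinset v₀).erase u₀) ?_ ?_ ?_ ?_ ?_ ?_ ?_
    · intro v hv
      simp only [Finset.mem_filter, Finset.mem_univ, true_and] at hv
      simp only [Finset.mem_union, Finset.mem_insert, Finset.mem_erase,
        Finset.mem_singleton, SimpleGraph.mem_neighborFinset]
      rcases hv with rfl | rfl | h | h
      · exact Or.inl (Or.inl (Or.inl rfl))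
      · exact Or.inl (Or.inr rfl)
      · by_cases hveq : v = v₀
        · exact Or.inl (Or.inr hveq)
        · exact Or.inl (Or.inl (Or.inr ⟨hveq, h⟩))
      · by_cases hueq : v = u₀
        · exact Or.inl (Or.inl (Or.inl hueq))
        · exact Or.inr ⟨hueq, h⟩
    · have hv₀mem : v₀ ∈ G.neighborFinset u₀ := by
        rw [SimpleGraph.mem_neighborFinset]; exact hadj₀.symm
      calc (insert u₀ ((G.neighborFinset u₀).erase v₀)).card
          ≤ ((G.neighborFinset u₀).erase v₀).card + 1 := Finset.card_insert_le _ _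
        _ = (G.degree u₀ - 1) + 1 := by
            rw [Finset.card_erase_of_mem hv₀mem, SimpleGraph.card_neighborFinset_eq_degree]
        _ = G.degree u₀ := by omega
        _ = k := hu₀tight.symm
    · simp
    · have hu₀mem' : u₀ ∈ G.neighborFinset v₀ := by
        rw [SimpleGraph.mem_neighborFinset]; exact hadj₀
      have hcard : ((G.neighborFinset v₀).erase u₀).card = G.degree v₀ - 1 := by
        rw [Finset.card_erase_of_mem hu₀mem', SimpleGraph.card_neighborFinset_eq_degree]
      omega
    · intro v hv
      rcases Finset.mem_insert.mp hv with rfl | hv'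
      · exact le_refl _
      · have : G.Adj u₀ v := by
          have := Finset.mem_of_mem_erase hv'
          rwa [SimpleGraph.mem_neighborFinset] at this
        exact zeta_le_zeta_of_adj G hu₀tight this
    · intro v hv
      rw [Finset.mem_singleton] at hv
      subst hv; exact le_refl _
    · intro v hv
      have hvne : v ≠ u₀ := (Finset.mem_erase.mp hv).1
      have hvadj : G.Adj v₀ v := by
        have := Finset.mem_of_mem_erase hv
        rwa [SimpleGraph.mem_neighborFinset] at this
      exact hother v hvadj hvne
end

section
/- For every finite simple graph G, α_2(G) ≥ Σ_{v ∈ V(G)} min{1, 1/(ζ(v) + 1/3)}, where α_2(G) is the maximum size of a vertex set S with Δ(G[S]) ≤ 2. -/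
/-!
A greedy argument. Let `u` have minimum degree `d` in the remaining graph `G[A]`; then `G[A]`
witnesses `d ≤ ζ(x)` for every `x ∈ A`, so every remaining weight `min 1 (1 / (ζ(x) + 1/3))`
is at most `t = min 1 (1 / (d + 1/3))`. Put `u` into the solution, keep `k = min d (2 - j u)`
of its neighbours (recording in `j` that they now have one more selected neighbour) and delete
the other neighbours. The potential `∑ x ∈ A, weight x * (3 - j x) / 3` drops by at most
`t * ((3 - j u) / 3 + (d - k) + k / 3) ≤ 1`, while the solution grows by one vertex.
-/

open SimpleGraph Finset

noncomputable def degWeight (d : ℕ) : ℝ := min 1 (1 / ((d : ℝ) + 1 / 3))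

lemma degWeight_nonneg (d : ℕ) : 0 ≤ degWeight d := le_min zero_le_one (by positivity)

lemma degWeight_antitone : Antitone degWeight := fun a b hab =>
  min_le_min_left _ (one_div_le_one_div_of_le (by positivity) (by gcongr))

lemma degWeight_mul_le_one {d j k : ℕ} (h : k = d ∨ k + j = 2) :
    degWeight d * ((3 - j) / 3 + (d - k) + k / 3) ≤ 1 := by
  have ht1 : degWeight d ≤ 1 := min_le_left _ _
  have htd : degWeight d * (d + 1 / 3) ≤ 1 := (le_div_iff₀ (by positivity)).1 (min_le_right _ _)
  have hcases : (3 - j : ℝ) / 3 + (d - k) + k / 3 ≤ 1 ∨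
      (3 - j : ℝ) / 3 + (d - k) + k / 3 ≤ d + 1 / 3 := by
    rcases h with rfl | h
    · rcases Nat.eq_zero_or_pos k with rfl | hk
      · left
        simp only [Nat.cast_zero, sub_zero, add_zero, zero_div]
        linarith [(j.cast_nonneg : (0 : ℝ) ≤ j)]
      · right
        have : (1 : ℝ) ≤ k := by exact_mod_cast hk
        linarith [(j.cast_nonneg : (0 : ℝ) ≤ j)]
    · right
      have : (k : ℝ) + j = 2 := by exact_mod_cast h
      linarith [(k.cast_nonneg : (0 : ℝ) ≤ k)]
  rcases hcases with he | he <;> nlinarith [degWeight_nonneg d]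

section Zeta

variable {V : Type*} {G : SimpleGraph V}

lemma subMinDeg_le {H : G.Subgraph} {x : V} (hx : x ∈ H.verts) :
    subMinDeg G H ≤ (H.neighborSet x).ncard :=
  Nat.sInf_le ⟨x, hx, rfl⟩

lemma le_subMinDeg {H : G.Subgraph} {d : ℕ} (hne : H.verts.Nonempty)
    (h : ∀ x ∈ H.verts, d ≤ (H.neighborSet x).ncard) : d ≤ subMinDeg G H :=
  le_csInf (hne.image _) (by rintro _ ⟨x, hx, rfl⟩; exact h x hx)

lemma subMinDeg_le_zeta [Finite V] {H : G.Subgraph} {x : V} (hx : x ∈ H.verts) :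
    subMinDeg G H ≤ zeta G x :=
  le_csSup ⟨Nat.card V, by
    rintro _ ⟨H', hx', rfl⟩
    exact (subMinDeg_le hx').trans (Set.ncard_le_card _)⟩ ⟨H, hx, rfl⟩

lemma le_zeta_of_le_card_filter_adj [Finite V] [DecidableRel G.Adj] {A : Finset V} {x : V}
    {d : ℕ} (hx : x ∈ A) (h : ∀ a ∈ A, d ≤ #(A.filter (G.Adj a))) : d ≤ zeta G x := by
  set H := (⊤ : G.Subgraph).induce A
  have hnbr : ∀ a ∈ A, H.neighborSet a = ↑(A.filter (G.Adj a)) := fun a ha => by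
    ext b; simp [H, ha]
  refine le_trans (le_subMinDeg ⟨x, hx⟩ fun a ha => ?_) (subMinDeg_le_zeta (H := H) hx)
  rw [hnbr a ha, Set.ncard_coe_finset]
  exact h a ha

end Zeta

section Greedy

variable {V : Type*}

noncomputable def residualWeight (G : SimpleGraph V) (j : V → ℕ) (x : V) : ℝ :=
  degWeight (zeta G x) * (3 - j x) / 3

-- `j v` is the number of neighbours of `v` already chosen, which `v` must tolerate on top of its
-- neighbours in `s`.
def IsTwoIndepWith (G : SimpleGraph V) [DecidableRel G.Adj] (j : V → ℕ) (s : Finset V) : Prop :=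
  ∀ v ∈ s, #(s.filter (G.Adj v)) + j v ≤ 2

def addAdj (G : SimpleGraph V) [DecidableRel G.Adj] (j : V → ℕ) (u : V) (v : V) : ℕ :=
  j v + if G.Adj u v then 1 else 0

def greedyRest [DecidableEq V] (G : SimpleGraph V) [DecidableRel G.Adj] (A K : Finset V) (u : V)
    (j : V → ℕ) : Finset V :=
  (A \ insert u (A.filter (G.Adj u))) ∪ K.filter (j · ≤ 1)

variable {G : SimpleGraph V} {A K : Finset V} {u : V} {j : V → ℕ}

lemma residualWeight_le_mul {x : V} {t : ℝ} (ht : degWeight (zeta G x) ≤ t) (hj : j x ≤ 3) :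
    residualWeight G j x ≤ t * ((3 - j x) / 3) := by
  have : (j x : ℝ) ≤ 3 := by exact_mod_cast hj
  rw [residualWeight, mul_div_assoc]
  gcongr

variable [DecidableRel G.Adj]

-- A kept neighbour of `u` loses one unit of budget, a deleted one had `j = 2` and so only a
-- third of its weight left: either way the loss is a third of the weight.
lemma residualWeight_sub_le_of_adj {x : V} {t : ℝ} (hxu : G.Adj u x)
    (ht : degWeight (zeta G x) ≤ t) (hj : j x ≤ 2) :
    residualWeight G j x - (if j x ≤ 1 then residualWeight G (addAdj G j u) x else 0) ≤
      t / 3 := by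
  split_ifs with hx1
  · simp only [residualWeight, addAdj, if_pos hxu]
    push_cast
    linarith
  · simp only [residualWeight, show j x = 2 by omega]
    push_cast
    linarith

variable [DecidableEq V]

lemma IsTwoIndepWith.insert {s : Finset V} (hu : u ∉ s)
    (hus : #(s.filter (G.Adj u)) + j u ≤ 2) (hs : IsTwoIndepWith G (addAdj G j u) s) :
    IsTwoIndepWith G j (insert u s) := by
  intro v hv
  rcases mem_insert.1 hv with rfl | hv
  · rwa [filter_insert, if_neg (G.irrefl)]
  · have := hs v hv
    rw [filter_insert]
    by_cases hvu : G.Adj v u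
    · rw [if_pos hvu, card_insert_of_notMem fun h => hu (mem_filter.1 h).1]
      simp only [addAdj, if_pos hvu.symm] at this
      omega
    · simp only [addAdj, if_neg fun h : G.Adj u v => hvu h.symm, add_zero] at this
      rwa [if_neg hvu]

lemma notMem_greedyRest (hK : K ⊆ A.filter (G.Adj u)) : u ∉ greedyRest G A K u j := by
  simp only [greedyRest, mem_union, mem_sdiff, mem_insert, true_or, not_true, and_false,
    false_or, mem_filter]
  exact fun h => G.irrefl (mem_filter.1 (hK h.1)).2

lemma greedyRest_ssubset (hu : u ∈ A) (hK : K ⊆ A.filter (G.Adj u)) :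
    greedyRest G A K u j ⊂ A :=
  ssubset_of_subset_of_ne
    (union_subset sdiff_subset ((filter_subset _ _).trans (hK.trans (filter_subset _ _))))
    fun h => notMem_greedyRest hK (h ▸ hu)

lemma filter_adj_greedyRest_subset :
    (greedyRest G A K u j).filter (G.Adj u) ⊆ K := by
  intro x hx
  simp only [greedyRest, mem_filter, mem_union, mem_sdiff, mem_insert] at hx
  tauto

lemma addAdj_le_two_of_mem_greedyRest (hj : ∀ x ∈ A, j x ≤ 2) {x : V}
    (hx : x ∈ greedyRest G A K u j) : addAdj G j u x ≤ 2 := by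
  simp only [greedyRest, mem_union, mem_sdiff, mem_insert, mem_filter, not_or] at hx
  rcases hx with ⟨hxA, -, hxN⟩ | ⟨-, hx1⟩
  · simp only [addAdj, if_neg fun h => hxN ⟨hxA, h⟩, add_zero]
    exact hj x hxA
  · unfold addAdj; split_ifs <;> omega

lemma sum_greedyRest_residualWeight (hK : K ⊆ A.filter (G.Adj u)) :
    ∑ x ∈ greedyRest G A K u j, residualWeight G (addAdj G j u) x =
      ∑ x ∈ A \ insert u (A.filter (G.Adj u)), residualWeight G j x +
        ∑ x ∈ K, if j x ≤ 1 then residualWeight G (addAdj G j u) x else 0 := by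
  rw [greedyRest, sum_union (disjoint_left.2 fun x hx hx' => (mem_sdiff.1 hx).2
    (mem_insert_of_mem (hK (mem_filter.1 hx').1))), sum_filter]
  congr 1
  refine sum_congr rfl fun x hx => ?_
  have hxu : ¬ G.Adj u x := fun h =>
    (mem_sdiff.1 hx).2 (mem_insert_of_mem (mem_filter.2 ⟨(mem_sdiff.1 hx).1, h⟩))
  simp only [residualWeight, addAdj, if_neg hxu, add_zero]

lemma sum_residualWeight_le (hu : u ∈ A) (hK : K ⊆ A.filter (G.Adj u)) (hj : ∀ x ∈ A, j x ≤ 2)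
    {t : ℝ} (ht : ∀ x ∈ A, degWeight (zeta G x) ≤ t) :
    ∑ x ∈ A, residualWeight G j x ≤
      t * ((3 - j u) / 3 + (#(A.filter (G.Adj u)) - #K) + #K / 3) +
        ∑ x ∈ greedyRest G A K u j, residualWeight G (addAdj G j u) x := by
  set N := A.filter (G.Adj u)
  set w := residualWeight G j
  have hNA : insert u N ⊆ A := insert_subset hu (filter_subset _ _)
  have hsplit : ∑ x ∈ A, w x =
      w u + ∑ x ∈ N \ K, w x + ∑ x ∈ K, w x + ∑ x ∈ A \ insert u N, w x := by
    rw [← sum_sdiff hNA, sum_insert fun h => G.irrefl (mem_filter.1 h).2, ← sum_sdiff hK]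
    ring
  have hwu : w u ≤ t * ((3 - j u) / 3) := residualWeight_le_mul (ht u hu) (by linarith [hj u hu])
  have hNK : ∑ x ∈ N \ K, w x ≤ (#N - #K) * t := by
    have := sum_le_card_nsmul (N \ K) w t fun x hx => by
      have hxA := hNA (mem_insert_of_mem (mem_sdiff.1 hx).1)
      have := residualWeight_le_mul (j := j) (ht x hxA) (by linarith [hj x hxA])
      nlinarith [degWeight_nonneg (zeta G x), ht x hxA, (j x).cast_nonneg (α := ℝ)]
    rwa [card_sdiff_of_subset hK, nsmul_eq_mul, Nat.cast_sub (card_le_card hK)] at this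
  have hKA : ∀ x ∈ K, x ∈ A := fun x hx => hNA (mem_insert_of_mem (hK hx))
  have hKloss := sum_le_card_nsmul K _ (t / 3) fun x hx =>
    residualWeight_sub_le_of_adj (mem_filter.1 (hK hx)).2 (ht x (hKA x hx)) (hj x (hKA x hx))
  rw [nsmul_eq_mul, sum_sub_distrib] at hKloss
  rw [hsplit, sum_greedyRest_residualWeight hK]
  linarith

end Greedy

theorem exists_isTwoIndepWith_sum_residualWeight_le {V : Type*} [Finite V] [DecidableEq V]
    (G : SimpleGraph V) [DecidableRel G.Adj] (A : Finset V) (j : V → ℕ)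
    (hj : ∀ x ∈ A, j x ≤ 2) :
    ∃ s ⊆ A, IsTwoIndepWith G j s ∧ ∑ x ∈ A, residualWeight G j x ≤ #s := by
  induction A using Finset.strongInduction generalizing j with
  | H A ih =>
    rcases A.eq_empty_or_nonempty with rfl | hA
    · exact ⟨∅, subset_rfl, by simp [IsTwoIndepWith], by simp⟩
    obtain ⟨u, hu, hmin⟩ := A.exists_min_image (fun a => #(A.filter (G.Adj a))) hA
    set N := A.filter (G.Adj u)
    obtain ⟨K, hKN, hKcard⟩ := N.exists_subset_card_eq (min_le_left #N (2 - j u))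
    obtain ⟨s, hsA, hs, hsum⟩ := ih _ (greedyRest_ssubset hu hKN) (addAdj G j u)
      fun x hx => addAdj_le_two_of_mem_greedyRest hj hx
    have hus : u ∉ s := fun h => notMem_greedyRest hKN (hsA h)
    have hju := hj u hu
    have huK : #(s.filter (G.Adj u)) ≤ #K :=
      card_le_card ((filter_subset_filter _ hsA).trans filter_adj_greedyRest_subset)
    refine ⟨insert u s, insert_subset hu (hsA.trans (greedyRest_ssubset hu hKN).subset),
      hs.insert hus (by omega), ?_⟩
    have hweight : ∀ x ∈ A, degWeight (zeta G x) ≤ degWeight #N := fun x hx =>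
      degWeight_antitone (le_zeta_of_le_card_filter_adj hx hmin)
    have hbudget := degWeight_mul_le_one (d := #N) (j := j u) (k := #K) (by omega)
    have := sum_residualWeight_le hu hKN hj hweight
    push_cast [card_insert_of_notMem hus]
    linarith

theorem stmt_18 {V : Type*} [Fintype V] [DecidableEq V] (G : SimpleGraph V)
    [DecidableRel G.Adj] :
    ∃ s : Finset V, (∀ v ∈ s, (s.filter (G.Adj v)).card ≤ 2) ∧
      (∑ v : V, min 1 ((1 : ℝ) / (zeta G v + 1/3))) ≤ s.card := by
  obtain ⟨s, -, hs, hsum⟩ :=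
    exists_isTwoIndepWith_sum_residualWeight_le G univ (fun _ => 0) fun _ _ => zero_le_two
  refine ⟨s, fun v hv => hs v hv, ?_⟩
  simpa [residualWeight, degWeight] using hsum
end
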